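/- A pullback (in the category of groupoids) of a functor satisfying 'injective equivalence' data along an isofibration is again an injective equivalence: concretely, if F : A → B admits S : B → A with S ∘ F = 𝟭_A and a natural isomorphism ε : F ∘ S ≅ 𝟭_B with ε whiskered by F the identity (ε_{F(a)} = id for all a), and p : E → B is an isofibration of groupoids, then the pullback functor F' : A ×_B E → E admits the analogous data. -/

import Mathlib

/-!
The section of the pullback sends `e` to `(S (p e), L e)`, where `L e` is a lift along the
isofibration `p` of the isomorphism `ε⁻¹ : p e ≅ F (S (p e))`. These lifts assemble into a functor
`L` with `L ⋙ p = p ⋙ S ⋙ F` and a natural isomorphism `𝟭 ≅ L`. The lift is chosen to be the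
identity whenever `ε⁻¹` already is one; by the normalisation of `ε` this happens at every
`e = F'(a, e)`, since there `p e = F a`. This makes the section a strict retraction of `F'`
and the new counit trivial on the image of `F'`.
-/

open CategoryTheory

section

variable {A B E : Type*} [Groupoid A] [Groupoid B] [Groupoid E]

/-- A functor is an isofibration if every isomorphism with source in its image
lifts to an isomorphism with prescribed source. -/
def IsIsofibration {A B : Type*} [Category A] [Category B] (F : A ⥤ B) : Prop :=
  ∀ (a : A) (b : B) (e : F.obj a ≅ b), ∃ (a' : A) (α : a ≅ a') (h : F.obj a' = b),
    F.map α.hom ≫ eqToHom h = e.hom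

/-- The (strict) pullback of groupoids along `F : A ⥤ B` and `p : E ⥤ B`:
pairs `(a, e)` with `F(a) = p(e)`. -/
structure GpdPullback (F : A ⥤ B) (p : E ⥤ B) where
  pt : A
  fib : E
  eq : F.obj pt = p.obj fib

/-- Morphisms in the pullback groupoid: compatible pairs of morphisms. -/
@[ext]
structure GpdPullbackHom {F : A ⥤ B} {p : E ⥤ B} (x y : GpdPullback F p) where
  base : x.pt ⟶ y.pt
  total : x.fib ⟶ y.fib
  w : F.map base ≫ eqToHom y.eq = eqToHom x.eq ≫ p.map total

instance (F : A ⥤ B) (p : E ⥤ B) : Category (GpdPullback F p) where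
  Hom := GpdPullbackHom
  id x := ⟨𝟙 _, 𝟙 _, by simp⟩
  comp f g := ⟨f.base ≫ g.base, f.total ≫ g.total, by
    rw [Functor.map_comp, Functor.map_comp, Category.assoc, g.w, ← Category.assoc, f.w,
      Category.assoc]⟩
  id_comp f := GpdPullbackHom.ext (Category.id_comp _) (Category.id_comp _)
  comp_id f := GpdPullbackHom.ext (Category.comp_id _) (Category.comp_id _)
  assoc f g h := GpdPullbackHom.ext (Category.assoc _ _ _) (Category.assoc _ _ _)

/-- The pullback `F' : A ×_B E ⥤ E` of `F` along `p`. -/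
def pbSnd (F : A ⥤ B) (p : E ⥤ B) : GpdPullback F p ⥤ E where
  obj x := x.fib
  map f := f.total
  map_id _ := rfl
  map_comp _ _ := rfl

namespace IsIsofibration

variable {C D : Type*} [Category C] [Category D] {p : C ⥤ D}

theorem exists_normalized_lift (hp : IsIsofibration p) (c : C) {d : D} (φ : p.obj c ≅ d) :
    ∃ (c' : C) (α : c ≅ c') (h : p.obj c' = d), p.map α.hom ≫ eqToHom h = φ.hom ∧
      ((∃ h₀ : p.obj c = d, φ.hom = eqToHom h₀) → ∃ hc : c = c', α = eqToIso hc) := by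
  by_cases hφ : ∃ h₀ : p.obj c = d, φ.hom = eqToHom h₀
  · obtain ⟨h₀, hφ⟩ := hφ
    exact ⟨c, Iso.refl c, h₀, by simp [hφ], fun _ => ⟨rfl, rfl⟩⟩
  · obtain ⟨c', α, h, hw⟩ := hp c d φ
    exact ⟨c', α, h, hw, fun h' => absurd h' hφ⟩

variable {K : C ⥤ D} (hp : IsIsofibration p) (θ : p ≅ K)

noncomputable def liftObj (c : C) : C :=
  (hp.exists_normalized_lift c (θ.app c)).choose

noncomputable def liftIso (c : C) : c ≅ hp.liftObj θ c :=
  (hp.exists_normalized_lift c (θ.app c)).choose_spec.choose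

theorem liftIso_spec (c : C) :
    ∃ h : p.obj (hp.liftObj θ c) = K.obj c,
      p.map (hp.liftIso θ c).hom ≫ eqToHom h = θ.hom.app c ∧
      ((∃ h₀ : p.obj c = K.obj c, θ.hom.app c = eqToHom h₀) →
        ∃ hc : c = hp.liftObj θ c, hp.liftIso θ c = eqToIso hc) :=
  (hp.exists_normalized_lift c (θ.app c)).choose_spec.choose_spec

theorem obj_liftObj (c : C) : p.obj (hp.liftObj θ c) = K.obj c :=
  (hp.liftIso_spec θ c).fst

theorem map_liftIso_inv_comp (c : C) :
    p.map (hp.liftIso θ c).inv ≫ θ.hom.app c = eqToHom (hp.obj_liftObj θ c) := by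
  rw [← (hp.liftIso_spec θ c).snd.1, ← Category.assoc, ← p.map_comp, Iso.inv_hom_id,
    p.map_id, Category.id_comp]

theorem liftObj_eq_self {c : C} (hc : ∃ h₀ : p.obj c = K.obj c, θ.hom.app c = eqToHom h₀) :
    hp.liftObj θ c = c :=
  ((hp.liftIso_spec θ c).snd.2 hc).fst.symm

theorem liftIso_eq_eqToIso {c : C} (hc : ∃ h₀ : p.obj c = K.obj c, θ.hom.app c = eqToHom h₀) :
    hp.liftIso θ c = eqToIso (hp.liftObj_eq_self θ hc).symm :=
  ((hp.liftIso_spec θ c).snd.2 hc).snd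

noncomputable def liftFunctor : C ⥤ C :=
  (𝟭 C).copyObj (hp.liftObj θ) (hp.liftIso θ)

noncomputable def liftFunctorIso : 𝟭 C ≅ hp.liftFunctor θ :=
  (𝟭 C).isoCopyObj (hp.liftObj θ) (hp.liftIso θ)

theorem liftFunctor_comp : hp.liftFunctor θ ⋙ p = K :=
  Functor.ext_of_iso (Functor.isoWhiskerRight (hp.liftFunctorIso θ).symm p ≪≫ θ)
    (hp.obj_liftObj θ) (hp.map_liftIso_inv_comp θ)

theorem comp_liftFunctor {X : Type*} [Category X] (J : X ⥤ C)
    (hJ : ∀ x, ∃ h₀ : p.obj (J.obj x) = K.obj (J.obj x), θ.hom.app (J.obj x) = eqToHom h₀) :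
    J ⋙ hp.liftFunctor θ = J :=
  Functor.ext_of_iso (Functor.isoWhiskerLeft J (hp.liftFunctorIso θ).symm)
    (fun x => hp.liftObj_eq_self θ (hJ x))
    (fun x => congrArg Iso.inv (hp.liftIso_eq_eqToIso θ (hJ x)))

end IsIsofibration

namespace GpdPullback

variable (F : A ⥤ B) (p : E ⥤ B)

def fst : GpdPullback F p ⥤ A where
  obj x := x.pt
  map f := f.base

theorem condition : fst F p ⋙ F = pbSnd F p ⋙ p :=
  CategoryTheory.Functor.ext (fun x => x.eq) (fun x y f => by
    change F.map f.base = eqToHom x.eq ≫ p.map f.total ≫ eqToHom y.eq.symm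
    rw [← Category.assoc, ← f.w]
    simp)

variable {F p} {X : Type*} [Category X]

def lift (G : X ⥤ A) (H : X ⥤ E) (h : G ⋙ F = H ⋙ p) : X ⥤ GpdPullback F p where
  obj x := ⟨G.obj x, H.obj x, Functor.congr_obj h x⟩
  map f := ⟨G.map f, H.map f, by
    rw [← Functor.comp_map, Functor.congr_hom h f]
    simp⟩

theorem lift_eta (Φ : X ⥤ GpdPullback F p) :
    lift (Φ ⋙ fst F p) (Φ ⋙ pbSnd F p) (congrArg (Φ ⋙ ·) (condition F p)) = Φ :=
  rfl

theorem functor_ext {Φ Ψ : X ⥤ GpdPullback F p} (h₁ : Φ ⋙ fst F p = Ψ ⋙ fst F p)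
    (h₂ : Φ ⋙ pbSnd F p = Ψ ⋙ pbSnd F p) : Φ = Ψ := by
  rw [← lift_eta Φ, ← lift_eta Ψ]
  congr

end GpdPullback

theorem exists_inv_app_eq_eqToHom {C D : Type*} [Category C] [Category D] {F : C ⥤ D}
    {S : D ⥤ C} (hSF : F ⋙ S = 𝟭 C) (ε : S ⋙ F ≅ 𝟭 D)
    (hnorm : ∀ c : C, ε.hom.app (F.obj c) =
      eqToHom (congrArg F.obj (Functor.congr_obj hSF c)))
    {c : C} {d : D} (hcd : F.obj c = d) :
    ∃ h : d = F.obj (S.obj d), ε.inv.app d = eqToHom h := by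
  subst hcd
  refine ⟨congrArg F.obj (Functor.congr_obj hSF c).symm, ?_⟩
  rw [← cancel_epi (ε.hom.app (F.obj c)), Iso.hom_inv_id_app, hnorm, eqToHom_trans, eqToHom_refl]

/-- The pullback of an injective equivalence along an isofibration of groupoids
again carries injective equivalence data. -/
theorem pullback_injective_equivalence (F : A ⥤ B) (p : E ⥤ B)
    (S : B ⥤ A) (hSF : F ⋙ S = 𝟭 A) (ε : S ⋙ F ≅ 𝟭 B)
    (hnorm : ∀ a : A, ε.hom.app (F.obj a) =
      eqToHom (congrArg F.obj (Functor.congr_obj hSF a)))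
    (hp : IsIsofibration p) :
    ∃ (S' : E ⥤ GpdPullback F p)
      (hr : pbSnd F p ⋙ S' = 𝟭 (GpdPullback F p))
      (ε' : S' ⋙ pbSnd F p ≅ 𝟭 E),
      ∀ x : GpdPullback F p, ε'.hom.app ((pbSnd F p).obj x) =
        eqToHom (congrArg (pbSnd F p).obj (Functor.congr_obj hr x)) := by
  let θ : p ≅ p ⋙ S ⋙ F := Functor.isoWhiskerLeft p ε.symm
  have hθ : ∀ x : GpdPullback F p, ∃ h, θ.hom.app ((pbSnd F p).obj x) = eqToHom h :=
    fun x => exists_inv_app_eq_eqToHom hSF ε hnorm x.eq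
  let S' := GpdPullback.lift (p ⋙ S) (hp.liftFunctor θ) (hp.liftFunctor_comp θ).symm
  have hfst : pbSnd F p ⋙ p ⋙ S = GpdPullback.fst F p := by
    rw [← Functor.assoc, ← GpdPullback.condition, Functor.assoc, hSF, Functor.comp_id]
  have hr : pbSnd F p ⋙ S' = 𝟭 _ :=
    GpdPullback.functor_ext hfst (hp.comp_liftFunctor θ (pbSnd F p) hθ)
  exact ⟨S', hr, (hp.liftFunctorIso θ).symm,
    fun x => congrArg Iso.inv (hp.liftIso_eq_eqToIso θ (hθ x))⟩

end
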